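/- arXiv:2602.10788 — 3 statements merged into one kernel-verified Lean document; each statement's English description precedes it below -/
import Mathlib

section
/- Let λ, μ ∈ ℂ. Let E be an sl₂-module, i : V(λ) → E an injective homomorphism of sl₂-modules, and p : E → V(μ) a surjective homomorphism of sl₂-modules with range(i) = ker(p). Suppose w ∈ E satisfies p(w) = w₀ (the lowest-weight basis vector of V(μ)) and h·w = μ·w, and let x ∈ V(λ) be the unique element with i(x) = f·w. Then there exists an sl₂-module homomorphism s : V(μ) → E with p ∘ s = id_{V(μ)} if and only if x ∈ { f·v : v ∈ V(λ)_μ }, the image of the weight space V(λ)_μ under the action of f. -/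
/-!
Context: sl₂ over ℂ with basis {e,f,h}, [h,e]=2e, [h,f]=-2f, [e,f]=h.
For λ ∈ ℂ, the lowest-weight Verma module V(λ) has ℂ-basis {w_k}_{k∈ℕ} with
e·w_k = w_{k+1}, h·w_k = (λ+2k)·w_k, f·w_k = −k(λ+k−1)·w_{k−1}.
An sl₂-module is encoded as a ℂ-module together with three endomorphisms
e, f, h satisfying the bracket relations.
-/

noncomputable section

universe u

/-- Carrier of the lowest-weight Verma module `V(λ)`:
formal ℂ-linear combinations of the basis vectors `w_k`, `k ∈ ℕ`. -/
abbrev VermaCarrier : Type := ℕ →₀ ℂ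

/-- The basis vector `w_k` of the Verma module. -/
def w (k : ℕ) : VermaCarrier := Finsupp.single k 1

/-- Action of `e` on `V(λ)`: `e · w_k = w_{k+1}`. -/
def vermaE : VermaCarrier →ₗ[ℂ] VermaCarrier := Finsupp.lmapDomain ℂ ℂ (· + 1)

/-- Action of `h` on `V(λ)`: `h · w_k = (λ + 2k) • w_k`. -/
def vermaH (lam : ℂ) : VermaCarrier →ₗ[ℂ] VermaCarrier :=
  Finsupp.lsum ℂ fun k => (lam + 2 * (k : ℂ)) • Finsupp.lsingle k

/-- Action of `f` on `V(λ)`: `f · w_k = −k(λ+k−1) • w_{k−1}` (with `w_{-1} = 0`). -/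
def vermaF (lam : ℂ) : VermaCarrier →ₗ[ℂ] VermaCarrier :=
  Finsupp.lsum ℂ fun k => (-(k : ℂ) * (lam + (k : ℂ) - 1)) • Finsupp.lsingle (k - 1)

/-- The weight space `V(λ)_ν`: the ℂ-span of those `w_k` with `λ + 2k = ν`. -/
def vermaWeight (lam nu : ℂ) : Submodule ℂ VermaCarrier :=
  Submodule.span ℂ {v | ∃ k : ℕ, lam + 2 * (k : ℂ) = nu ∧ v = w k}

/-- An sl₂-module over ℂ: a ℂ-module with endomorphisms `e`, `f`, `h`
satisfying `[h,e] = 2e`, `[h,f] = −2f`, `[e,f] = h`. -/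
structure Sl2Module : Type (u + 1) where
  carrier : Type u
  [acg : AddCommGroup carrier]
  [mc : Module ℂ carrier]
  e : carrier →ₗ[ℂ] carrier
  f : carrier →ₗ[ℂ] carrier
  h : carrier →ₗ[ℂ] carrier
  rel_he : h ∘ₗ e - e ∘ₗ h = (2 : ℂ) • e
  rel_hf : h ∘ₗ f - f ∘ₗ h = (-2 : ℂ) • f
  rel_ef : e ∘ₗ f - f ∘ₗ e = h

attribute [instance] Sl2Module.acg Sl2Module.mc

/- ===== auxiliary lemmas ===== -/

lemma vermaE_single (k : ℕ) (c : ℂ) : vermaE (Finsupp.single k c) = Finsupp.single (k+1) c := by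
  simp [vermaE, Finsupp.mapDomain_single]

lemma vermaH_single (lam : ℂ) (k : ℕ) (c : ℂ) :
    vermaH lam (Finsupp.single k c) = (lam + 2 * k) • Finsupp.single k c := by
  simp [vermaH, Finsupp.smul_single]

lemma vermaF_single (lam : ℂ) (k : ℕ) (c : ℂ) :
    vermaF lam (Finsupp.single k c) = (-(k:ℂ) * (lam + k - 1)) • Finsupp.single (k-1) c := by
  simp [vermaF, Finsupp.smul_single]

lemma vermaH_apply (lam : ℂ) (v : VermaCarrier) (j : ℕ) :
    vermaH lam v j = (lam + 2 * j) * v j := by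
  rw [vermaH, Finsupp.lsum_apply]
  simp only [Finsupp.sum_apply, LinearMap.smul_apply, Finsupp.lsingle_apply,
    Finsupp.smul_apply, Finsupp.single_apply, smul_eq_mul, mul_ite, mul_zero]
  rw [Finsupp.sum_ite_eq' v j (fun k c => (lam + 2*k) * c)]
  split
  · rfl
  · next h => rw [Finsupp.notMem_support_iff.mp h, mul_zero]

lemma mem_weight_of_H (lam mu : ℂ) (v : VermaCarrier) (hv : vermaH lam v = mu • v) :
    v ∈ vermaWeight lam mu := by
  have hv' : ∀ j : ℕ, (lam + 2 * j) * v j = mu * v j := by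
    intro j
    have := congrArg (fun u : VermaCarrier => u j) hv
    simpa [vermaH_apply] using this
  have hrep : v = v.sum fun k c => c • w k := by
    simp only [w, Finsupp.smul_single, smul_eq_mul, mul_one]
    exact (Finsupp.sum_single v).symm
  rw [hrep]
  apply Submodule.sum_mem
  intro k hk
  apply Submodule.smul_mem
  apply Submodule.subset_span
  refine ⟨k, ?_, rfl⟩
  have hvk : v k ≠ 0 := Finsupp.mem_support_iff.mp hk
  have := hv' k
  exact mul_right_cancel₀ hvk this

lemma H_of_mem_weight (lam mu : ℂ) (v : VermaCarrier) (hv : v ∈ vermaWeight lam mu) :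
    vermaH lam v = mu • v := by
  induction hv using Submodule.span_induction with
  | mem y hy =>
    obtain ⟨k, hk, rfl⟩ := hy
    rw [w, vermaH_single, hk]
  | zero => simp
  | add y z _ _ hy hz => rw [map_add, hy, hz, smul_add]
  | smul c y _ hy => rw [map_smul, hy, smul_comm]

lemma he_apply (E : Sl2Module.{u}) (y : E.carrier) :
    E.h (E.e y) = E.e (E.h y) + (2:ℂ) • E.e y := by
  have := congrArg (fun T : E.carrier →ₗ[ℂ] E.carrier => T y) E.rel_he
  simp only [LinearMap.sub_apply, LinearMap.comp_apply, LinearMap.smul_apply] at this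
  linear_combination (norm := module) this

lemma fe_apply (E : Sl2Module.{u}) (y : E.carrier) :
    E.f (E.e y) = E.e (E.f y) - E.h y := by
  have := congrArg (fun T : E.carrier →ₗ[ℂ] E.carrier => T y) E.rel_ef
  simp only [LinearMap.sub_apply, LinearMap.comp_apply] at this
  rw [eq_sub_iff_add_eq, ← this]; abel

lemma h_pow (E : Sl2Module.{u}) (mu : ℂ) (w' : E.carrier) (hw : E.h w' = mu • w') (k : ℕ) :
    E.h ((E.e ^ k) w') = (mu + 2 * k) • (E.e ^ k) w' := by
  induction k with
  | zero => simpa using hw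
  | succ k ih =>
    rw [pow_succ', Module.End.mul_apply, he_apply, ih, map_smul]
    push_cast
    match_scalars
    ring

lemma f_pow (E : Sl2Module.{u}) (mu : ℂ) (w' : E.carrier) (hw : E.h w' = mu • w')
    (hf : E.f w' = 0) (k : ℕ) :
    E.f ((E.e ^ k) w') = (-(k:ℂ) * (mu + k - 1)) • (E.e ^ (k-1)) w' := by
  induction k with
  | zero => simpa using hf
  | succ k ih =>
    rw [pow_succ', Module.End.mul_apply, fe_apply, ih, h_pow E mu w' hw, map_smul]
    cases k with
    | zero => norm_num
    | succ n =>
      have h1 : n + 1 - 1 = n := rfl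
      rw [h1, Nat.add_sub_cancel]
      have h2 : E.e ((E.e ^ n) w') = (E.e ^ (n+1)) w' := by
        rw [pow_succ', Module.End.mul_apply]
      rw [h2]
      push_cast
      match_scalars
      ring

lemma p_pow (E : Sl2Module.{u}) (p : E.carrier →ₗ[ℂ] VermaCarrier)
    (hpe : p ∘ₗ E.e = vermaE ∘ₗ p) (w' : E.carrier) (hw0 : p w' = w 0) (k : ℕ) :
    p ((E.e ^ k) w') = w k := by
  induction k with
  | zero => simpa using hw0
  | succ k ih =>
    rw [pow_succ', Module.End.mul_apply]
    have := congrArg (fun T : E.carrier →ₗ[ℂ] VermaCarrier => T ((E.e ^ k) w')) hpe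
    simp only [LinearMap.comp_apply] at this
    rw [this, ih, w, vermaE_single]
    rfl

theorem stmt0 (lam mu : ℂ) (E : Sl2Module.{u})
    (i : VermaCarrier →ₗ[ℂ] E.carrier) (p : E.carrier →ₗ[ℂ] VermaCarrier)
    (hie : i ∘ₗ vermaE = E.e ∘ₗ i)
    (hif : i ∘ₗ vermaF lam = E.f ∘ₗ i)
    (hih : i ∘ₗ vermaH lam = E.h ∘ₗ i)
    (hpe : p ∘ₗ E.e = vermaE ∘ₗ p)
    (hpf : p ∘ₗ E.f = vermaF mu ∘ₗ p)
    (hph : p ∘ₗ E.h = vermaH mu ∘ₗ p)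
    (hinj : Function.Injective i) (hsurj : Function.Surjective p)
    (hexact : LinearMap.range i = LinearMap.ker p)
    (wE : E.carrier) (hw0 : p wE = w 0) (hwh : E.h wE = mu • wE)
    (x : VermaCarrier) (hx : i x = E.f wE) :
    (∃ s : VermaCarrier →ₗ[ℂ] E.carrier,
        s ∘ₗ vermaE = E.e ∘ₗ s ∧ s ∘ₗ vermaF mu = E.f ∘ₗ s ∧
        s ∘ₗ vermaH mu = E.h ∘ₗ s ∧ p ∘ₗ s = LinearMap.id) ↔
      ∃ v ∈ vermaWeight lam mu, vermaF lam v = x := by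
  constructor
  · -- splitting ⇒ x in image of weight space
    rintro ⟨s, hse, hsf, hsh, hps⟩
    set w' : E.carrier := s (w 0) with hw'def
    have hpw' : p w' = w 0 := by
      have := congrArg (fun T : VermaCarrier →ₗ[ℂ] VermaCarrier => T (w 0)) hps
      simpa using this
    have hhw' : E.h w' = mu • w' := by
      have := congrArg (fun T : VermaCarrier →ₗ[ℂ] E.carrier => T (w 0)) hsh
      simp only [LinearMap.comp_apply] at this
      rw [← this, w, vermaH_single, map_smul]
      norm_num
      rfl
    have hfw' : E.f w' = 0 := by
      have := congrArg (fun T : VermaCarrier →ₗ[ℂ] E.carrier => T (w 0)) hsf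
      simp only [LinearMap.comp_apply] at this
      rw [← this, w, vermaF_single]
      norm_num
    -- wE - w' is in the image of i
    have hker : wE - w' ∈ LinearMap.ker p := by
      simp [LinearMap.mem_ker, map_sub, hw0, hpw']
    rw [← hexact] at hker
    obtain ⟨v, hv⟩ := hker
    have hih' : ∀ u, i (vermaH lam u) = E.h (i u) := fun u =>
      congrArg (fun T : VermaCarrier →ₗ[ℂ] E.carrier => T u) hih
    have hif' : ∀ u, i (vermaF lam u) = E.f (i u) := fun u =>
      congrArg (fun T : VermaCarrier →ₗ[ℂ] E.carrier => T u) hif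
    have hvH : vermaH lam v = mu • v := by
      apply hinj
      rw [hih', hv, map_sub, hwh, hhw', map_smul, hv, smul_sub]
    have hvF : vermaF lam v = x := by
      apply hinj
      rw [hif', hv, map_sub, hfw', sub_zero, hx]
    exact ⟨v, mem_weight_of_H lam mu v hvH, hvF⟩
  · -- x = f v with v in weight space ⇒ splitting exists
    rintro ⟨v, hvmem, hvF⟩
    set w' : E.carrier := wE - i v with hw'def
    have hvH : vermaH lam v = mu • v := H_of_mem_weight lam mu v hvmem
    have hih' : ∀ u, i (vermaH lam u) = E.h (i u) := fun u =>
      congrArg (fun T : VermaCarrier →ₗ[ℂ] E.carrier => T u) hih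
    have hif' : ∀ u, i (vermaF lam u) = E.f (i u) := fun u =>
      congrArg (fun T : VermaCarrier →ₗ[ℂ] E.carrier => T u) hif
    have hpw' : p w' = w 0 := by
      have hivker : p (i v) = 0 := by
        have : i v ∈ LinearMap.ker p := hexact ▸ LinearMap.mem_range_self i v
        exact this
      rw [hw'def, map_sub, hw0, hivker, sub_zero]
    have hhw' : E.h w' = mu • w' := by
      rw [hw'def, map_sub, hwh, ← hih', hvH, map_smul, smul_sub]
    have hfw' : E.f w' = 0 := by
      rw [hw'def, map_sub, ← hif', hvF, hx, sub_self]
    -- the section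
    refine ⟨Finsupp.lsum ℂ fun k => LinearMap.toSpanSingleton ℂ E.carrier ((E.e ^ k) w'),
      ?_, ?_, ?_, ?_⟩
    · apply Finsupp.lhom_ext
      intro k c
      simp only [LinearMap.comp_apply, vermaE_single, Finsupp.lsum_single,
        LinearMap.toSpanSingleton_apply]
      rw [pow_succ', Module.End.mul_apply, map_smul]
    · apply Finsupp.lhom_ext
      intro k c
      simp only [LinearMap.comp_apply, vermaF_single, map_smul, Finsupp.lsum_single,
        LinearMap.toSpanSingleton_apply]
      rw [f_pow E mu w' hhw' hfw' k, smul_comm]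
    · apply Finsupp.lhom_ext
      intro k c
      simp only [LinearMap.comp_apply, vermaH_single, map_smul, Finsupp.lsum_single,
        LinearMap.toSpanSingleton_apply]
      rw [h_pow E mu w' hhw' k, smul_comm]
    · apply Finsupp.lhom_ext
      intro k c
      simp only [LinearMap.comp_apply, Finsupp.lsum_single,
        LinearMap.toSpanSingleton_apply, LinearMap.id_apply]
      rw [map_smul, p_pow E p hpe w' hpw' k, w]
      simp [Finsupp.smul_single]

end
end

section
/- If λ is an integer with λ ≤ 0, then U := span_ℂ{ w_k : k ≥ 1−λ } is an sl₂-submodule of V(λ), and the ℂ-linear map sending w_k (for k ≥ 1−λ) to the basis vector w′_{k−(1−λ)} of V(2−λ) is an isomorphism of sl₂-modules U ≅ V(2−λ). In particular, V(λ) is a reducible sl₂-module for every nonpositive integer λ, while V(λ) is irreducible whenever λ is not a nonpositive integer. -/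
/-!
Context: sl₂ over ℂ with basis {e,f,h}, [h,e]=2e, [h,f]=-2f, [e,f]=h.
For λ ∈ ℂ, the lowest-weight Verma module V(λ) has ℂ-basis {w_k}_{k∈ℕ} with
e·w_k = w_{k+1}, h·w_k = (λ+2k)·w_k, f·w_k = −k(λ+k−1)·w_{k−1}.
-/

noncomputable section

universe u

/-- The subspace `U = span_ℂ{ w_k : k ≥ 1−λ }` (for `λ = −n`, so `1−λ = n+1`). -/
def vermaU (n : ℕ) : Submodule ℂ VermaCarrier :=
  Submodule.span ℂ {v | ∃ k : ℕ, n + 1 ≤ k ∧ v = w k}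

/-- The ℂ-linear map `V(2−λ) → V(λ)` sending the basis vector `w′_j` of `V(2−λ)` to
`w_{j+(1−λ)}` (for `λ = −n`); it is the inverse of the correspondence
`w_k ↦ w′_{k−(1−λ)}` of Statement 2. -/
def shiftMap (n : ℕ) : VermaCarrier →ₗ[ℂ] VermaCarrier :=
  Finsupp.lmapDomain ℂ ℂ (· + (n + 1))

-- auxiliary lemmas

lemma aux_E_w (k : ℕ) : vermaE (w k) = w (k + 1) := by
  simp [vermaE, w, Finsupp.mapDomain_single]

lemma aux_H_w (lam : ℂ) (k : ℕ) : vermaH lam (w k) = (lam + 2 * k) • w k := by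
  simp [vermaH, w, Finsupp.smul_single]

lemma aux_F_w (lam : ℂ) (k : ℕ) :
    vermaF lam (w k) = (-(k : ℂ) * (lam + k - 1)) • w (k - 1) := by
  simp [vermaF, w, Finsupp.smul_single]

lemma aux_shift_w (n j : ℕ) : shiftMap n (w j) = w (j + (n + 1)) := by
  simp [shiftMap, w, Finsupp.mapDomain_single]

lemma aux_single_eq_smul_w (a : ℕ) (b : ℂ) : (Finsupp.single a b : VermaCarrier) = b • w a := by
  simp [w, Finsupp.smul_single]

lemma vermaF_apply (lam : ℂ) (v : VermaCarrier) (d : ℕ) :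
    vermaF lam v d = (-((d:ℂ)+1) * (lam + d)) * v (d+1) := by
  induction v using Finsupp.induction_linear with
  | zero => simp
  | add f g hf hg => rw [map_add]; simp only [Finsupp.add_apply, hf, hg]; ring
  | single a b =>
    simp only [vermaF, Finsupp.lsum_single, LinearMap.smul_apply, Finsupp.lsingle_apply,
      Finsupp.smul_single, Finsupp.single_apply, smul_eq_mul]
    rcases a with _ | a
    · simp
    · simp only [Nat.succ_sub_one, Nat.add_right_cancel_iff]
      by_cases h : a = d
      · subst h
        split_ifs with hh
        · push_cast; ring
        · ring
      · simp [h, Ne.symm h]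

lemma w_mem_U (n k : ℕ) (hk : n + 1 ≤ k) : w k ∈ vermaU n :=
  Submodule.subset_span ⟨k, hk, rfl⟩

lemma U_invariant (n : ℕ) (lam : ℂ) (hlam : lam = -(n : ℂ)) :
    ∀ v ∈ vermaU n,
      vermaE v ∈ vermaU n ∧ vermaF lam v ∈ vermaU n ∧ vermaH lam v ∈ vermaU n := by
  intro v hv
  induction hv using Submodule.span_induction with
  | mem x hx =>
    obtain ⟨k, hk, rfl⟩ := hx
    refine ⟨?_, ?_, ?_⟩
    · rw [aux_E_w]; exact w_mem_U n _ (by omega)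
    · rw [aux_F_w]
      rcases eq_or_lt_of_le hk with h | h
      · have : (-(k : ℂ) * (lam + k - 1)) = 0 := by
          subst hlam; rw [← h]; push_cast; ring
        rw [this, zero_smul]; exact zero_mem _
      · exact Submodule.smul_mem _ _ (w_mem_U n _ (by omega))
    · rw [aux_H_w]; exact Submodule.smul_mem _ _ (w_mem_U n _ hk)
  | zero => refine ⟨?_, ?_, ?_⟩ <;> simp [zero_mem]
  | add x y hx hy ihx ihy =>
    exact ⟨by rw [map_add]; exact add_mem ihx.1 ihy.1,
      by rw [map_add]; exact add_mem ihx.2.1 ihy.2.1,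
      by rw [map_add]; exact add_mem ihx.2.2 ihy.2.2⟩
  | smul a x hx ih =>
    exact ⟨by rw [map_smul]; exact Submodule.smul_mem _ _ ih.1,
      by rw [map_smul]; exact Submodule.smul_mem _ _ ih.2.1,
      by rw [map_smul]; exact Submodule.smul_mem _ _ ih.2.2⟩

lemma shift_injective (n : ℕ) : Function.Injective (shiftMap n) := by
  exact Finsupp.mapDomain_injective (add_left_injective (n + 1))

lemma shift_range (n : ℕ) : LinearMap.range (shiftMap n) = vermaU n := by
  apply le_antisymm
  · rintro x ⟨v, rfl⟩
    induction v using Finsupp.induction_linear with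
    | zero => rw [map_zero]; exact zero_mem _
    | add f g hf hg => rw [map_add]; exact add_mem hf hg
    | single a b =>
      rw [aux_single_eq_smul_w, map_smul, aux_shift_w]
      exact Submodule.smul_mem _ _ (w_mem_U n _ (by omega))
  · rw [vermaU]
    apply Submodule.span_le.mpr
    rintro x ⟨k, hk, rfl⟩
    exact ⟨w (k - (n + 1)), by rw [aux_shift_w]; congr 1; omega⟩

lemma shift_comm_E (n : ℕ) : shiftMap n ∘ₗ vermaE = vermaE ∘ₗ shiftMap n := by
  apply Finsupp.lhom_ext; intro a b
  simp only [LinearMap.comp_apply, aux_single_eq_smul_w, map_smul, aux_E_w, aux_shift_w]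
  congr 2
  omega

lemma shift_comm_F (n : ℕ) (lam : ℂ) (hlam : lam = -(n : ℂ)) :
    shiftMap n ∘ₗ vermaF (2 - lam) = vermaF lam ∘ₗ shiftMap n := by
  apply Finsupp.lhom_ext; intro a b
  simp only [LinearMap.comp_apply, aux_single_eq_smul_w, map_smul, aux_F_w, aux_shift_w,
    map_smul]
  subst hlam
  rcases a with _ | a
  · have h1 : (-(0 : ℕ) * (2 - -(n:ℂ) + (0:ℕ) - 1)) = 0 := by push_cast; ring
    have h2 : (-((0 + (n+1) : ℕ)) * (-(n:ℂ) + ((0 + (n+1) : ℕ)) - 1)) = 0 := by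
      push_cast; ring
    rw [h1, h2]; simp
  · have hidx1 : (a + 1 - 1) + (n + 1) = a + n + 1 := by omega
    have hidx2 : (a + 1 + (n + 1)) - 1 = a + n + 1 := by omega
    rw [hidx1, hidx2]
    congr 2
    push_cast
    ring

lemma shift_comm_H (n : ℕ) (lam : ℂ) (hlam : lam = -(n : ℂ)) :
    shiftMap n ∘ₗ vermaH (2 - lam) = vermaH lam ∘ₗ shiftMap n := by
  apply Finsupp.lhom_ext; intro a b
  simp only [LinearMap.comp_apply, aux_single_eq_smul_w, map_smul, aux_H_w, aux_shift_w]
  subst hlam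
  congr 2
  push_cast
  ring

lemma w0_not_mem_U (n : ℕ) : w 0 ∉ vermaU n := by
  intro h
  have hle : vermaU n ≤ LinearMap.ker (Finsupp.lapply (M := ℂ) (R := ℂ) 0) := by
    apply Submodule.span_le.mpr
    rintro x ⟨k, hk, rfl⟩
    simp only [SetLike.mem_coe, LinearMap.mem_ker, Finsupp.lapply_apply]
    rw [w, Finsupp.single_apply, if_neg (by omega)]
  have := hle h
  simp only [LinearMap.mem_ker, Finsupp.lapply_apply, w, Finsupp.single_eq_same] at this
  exact one_ne_zero this

/-- If `λ = −n` (n ∈ ℕ) then `U = span{w_k : k ≥ 1−λ}` is an sl₂-submodule of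
`V(λ)` and the correspondence `w_k ↔ w′_{k−(1−λ)}` is an isomorphism of sl₂-modules
`U ≅ V(2−λ)` (expressed via its inverse `shiftMap n`, a ℂ-linear bijection onto `U`
intertwining the sl₂-actions).  In particular `V(λ)` is reducible for every nonpositive
integer `λ`, while `V(λ)` is irreducible whenever `λ` is not a nonpositive integer. -/
theorem stmt2 :
    (∀ (n : ℕ) (lam : ℂ), lam = -(n : ℂ) →
      (∀ v ∈ vermaU n,
          vermaE v ∈ vermaU n ∧ vermaF lam v ∈ vermaU n ∧ vermaH lam v ∈ vermaU n) ∧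
      (Function.Injective (shiftMap n) ∧ LinearMap.range (shiftMap n) = vermaU n ∧
        shiftMap n ∘ₗ vermaE = vermaE ∘ₗ shiftMap n ∧
        shiftMap n ∘ₗ vermaF (2 - lam) = vermaF lam ∘ₗ shiftMap n ∧
        shiftMap n ∘ₗ vermaH (2 - lam) = vermaH lam ∘ₗ shiftMap n) ∧
      (∃ N : Submodule ℂ VermaCarrier,
        (∀ v ∈ N, vermaE v ∈ N ∧ vermaF lam v ∈ N ∧ vermaH lam v ∈ N) ∧
        N ≠ ⊥ ∧ N ≠ ⊤)) ∧
    (∀ lam : ℂ, ¬(∃ n : ℕ, lam = -(n : ℂ)) →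
      ∀ N : Submodule ℂ VermaCarrier,
        (∀ v ∈ N, vermaE v ∈ N ∧ vermaF lam v ∈ N ∧ vermaH lam v ∈ N) →
        N = ⊥ ∨ N = ⊤) := by
  constructor
  · intro n lam hlam
    refine ⟨U_invariant n lam hlam,
      ⟨shift_injective n, shift_range n, shift_comm_E n, shift_comm_F n lam hlam,
        shift_comm_H n lam hlam⟩,
      vermaU n, U_invariant n lam hlam, ?_, ?_⟩
    · intro h
      have hmem : w (n+1) ∈ vermaU n := w_mem_U n _ le_rfl
      rw [h, Submodule.mem_bot] at hmem
      exact one_ne_zero (Finsupp.single_eq_zero.mp hmem)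
    · intro h
      exact w0_not_mem_U n (h ▸ Submodule.mem_top)
  · intro lam hno N hN
    by_cases hbot : N = ⊥
    · exact Or.inl hbot
    right
    have hcoef : ∀ d : ℕ, (-((d:ℂ)+1) * (lam + (d:ℂ))) ≠ 0 := by
      intro d
      apply mul_ne_zero
      · exact neg_ne_zero.mpr (Nat.cast_add_one_ne_zero (R := ℂ) d)
      · intro h
        exact hno ⟨d, by linear_combination h⟩
    -- step 1: w 0 ∈ N
    have key : ∀ d : ℕ, ∀ v ∈ N, v ≠ 0 → (∀ k ∈ v.support, k ≤ d) → w 0 ∈ N := by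
      intro d
      induction d with
      | zero =>
        intro v hv hne hsupp
        have h0 : v 0 ≠ 0 := by
          intro h0
          apply hne
          ext a
          by_cases ha : a = 0
          · simpa [ha] using h0
          · by_contra hva
            have := hsupp a (Finsupp.mem_support_iff.mpr (by simpa using hva))
            omega
        obtain ⟨c, hc, hv_eq⟩ : ∃ c : ℂ, c ≠ 0 ∧ v = c • w 0 := by
          refine ⟨v 0, h0, ?_⟩
          ext a
          by_cases ha : a = 0
          · subst ha; simp [w]
          · have hva : v a = 0 := by
              by_contra hva
              have := hsupp a (Finsupp.mem_support_iff.mpr hva)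
              omega
            simp [w, Finsupp.single_apply, Ne.symm ha, hva]
        have := N.smul_mem c⁻¹ hv
        rwa [hv_eq, smul_smul, inv_mul_cancel₀ hc, one_smul] at this
      | succ d ih =>
        intro v hv hne hsupp
        by_cases hd : v (d+1) = 0
        · refine ih v hv hne (fun k hk => ?_)
          have hk' := hsupp k hk
          have : k ≠ d + 1 := by
            intro h
            exact (Finsupp.mem_support_iff.mp hk) (h ▸ hd)
          omega
        · have huN : vermaF lam v ∈ N := (hN v hv).2.1
          have hud : (vermaF lam v) d ≠ 0 := by
            rw [vermaF_apply]
            exact mul_ne_zero (hcoef d) hd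
          have hune : vermaF lam v ≠ 0 := fun h => hud (by simp [h])
          refine ih (vermaF lam v) huN hune (fun k hk => ?_)
          have hk' : (vermaF lam v) k ≠ 0 := Finsupp.mem_support_iff.mp hk
          rw [vermaF_apply] at hk'
          have : v (k+1) ≠ 0 := fun h => hk' (by simp [h])
          have := hsupp (k+1) (Finsupp.mem_support_iff.mpr this)
          omega
    obtain ⟨v, hvN, hvne⟩ := Submodule.exists_mem_ne_zero_of_ne_bot hbot
    have hw0 : w 0 ∈ N :=
      key (v.support.sup id) v hvN hvne (fun k hk => Finset.le_sup (f := id) hk)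
    -- step 2: all w m ∈ N
    have hwm : ∀ m : ℕ, w m ∈ N := by
      intro m
      induction m with
      | zero => exact hw0
      | succ m ih => rw [← aux_E_w]; exact (hN _ ih).1
    -- step 3: N = ⊤
    rw [eq_top_iff]
    intro v hv
    clear hv
    induction v using Finsupp.induction_linear with
    | zero => exact zero_mem _
    | add f g hf hg => exact add_mem hf hg
    | single a b => rw [aux_single_eq_smul_w]; exact N.smul_mem _ (hwm a)


end
end

section
/- Fix even integers λ_h ≥ 0 and λ_v ≥ 0, and let ℰ = Σ ℰ_{n,m,r,l} χ^r t^l be a (λ_h,λ_v)-family of 0-forms. Then σ₋ℰ = 0 if and only if ℰ_{n,m,r,l} = 0 for every index (n,m,r,l) with (n,m,r) ≠ (λ_h/2, λ_h/2, 0). Consequently, since no form degree lies below 0, the cohomology H⁰(σ₋) on (λ_h,λ_v)-families equals the space of families of the form ℰ_{λ_h/2, λ_h/2, 0, λ_v/2} · t^{λ_v/2} with ℰ_{λ_h/2, λ_h/2, 0, λ_v/2} an arbitrary bihomogeneous element of ℂ[u¹,u²,ū¹,ū²] of bidegree (λ_h/2, λ_h/2). -/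
set_option synthInstance.maxSize 1000
set_option maxHeartbeats 1000000

/-!
Context for the σ₋-complex in the (adj ⊗ adj) sector.

* `Pu = ℂ[u¹,u²,ū¹,ū²]` is the polynomial ring in the auxiliary spinor variables,
  indexed by `Sum.inl α ↔ u^α` and `Sum.inr α̇ ↔ ū^{α̇}` (`α, α̇ ∈ Fin 2`, 0 ↔ 1, 1 ↔ 2).
* The exterior algebra Λ on the four anticommuting generators `e^{αα̇}` is modelled
  concretely: `WSp = Finset (Fin 2 × Fin 2) → Pu` records the `Pu`-coefficient of each
  exterior monomial `e^{g₁} ∧ e^{g₂} ∧ …` (indexed by the subset `{g₁ < g₂ < …}` of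
  generators in a fixed order); left multiplication by a generator carries the usual
  Koszul sign.  `FormDeg k F` says that `F ∈ Λ^k ⊗ Pu`.
* A `(λ_h, λ_v)`-family of k-forms `ω = Σ ω_{n,m,r,l} χ^r t^l` is modelled by the
  function `(n,m,r,l) ↦ ω_{n,m,r,l}`, i.e. an element of `Fam = ℕ → ℕ → ℕ → ℕ → WSp`;
  `IsFam k λ_h λ_v ω` states the support, form-degree and bihomogeneity conditions.
* `sigmaM` is the operator σ₋, written slot-wise.
-/

noncomputable section

open MvPolynomial

/-- Index type of the variables `u¹,u²,ū¹,ū²`. -/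
abbrev UVar : Type := Fin 2 ⊕ Fin 2

/-- The polynomial ring `ℂ[u¹,u²,ū¹,ū²]`. -/
abbrev Pu : Type := MvPolynomial UVar ℂ

/-- The variable `u^α`. -/
def uvv (a : Fin 2) : Pu := X (Sum.inl a)

/-- The variable `ū^{α̇}`. -/
def ubvv (a : Fin 2) : Pu := X (Sum.inr a)

/-- Lowered variables `u_1 = −u²`, `u_2 = u¹`. -/
def ulow : Fin 2 → Pu := ![-(uvv 1), uvv 0]

/-- Lowered variables `ū_1 = −ū²`, `ū_2 = ū¹`. -/
def ublow : Fin 2 → Pu := ![-(ubvv 1), ubvv 0]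

/-- Index of the exterior generators `e^{αα̇}`. -/
abbrev GIdx : Type := Fin 2 × Fin 2

/-- The model of `Λ ⊗ ℂ[u,ū]`: the coefficient of each exterior monomial. -/
abbrev WSp : Type := Finset GIdx → Pu

/-- A fixed enumeration of the generators. -/
def genc (g : GIdx) : ℕ := 2 * (g.1 : ℕ) + (g.2 : ℕ)

/-- The Koszul sign picked up when wedging `e^g` onto the exterior monomial `S`. -/
def sgn (g : GIdx) (S : Finset GIdx) : ℂ :=
  (-1 : ℂ) ^ (S.filter fun g' => genc g' < genc g).card

/-- Left exterior multiplication by the generator `e^g`. -/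
def eOp (g : GIdx) : Module.End ℂ WSp where
  toFun F := fun S => if g ∈ S then sgn g S • F (S.erase g) else 0
  map_add' F G := by
    funext S
    by_cases h : g ∈ S <;> simp [h, smul_add]
  map_smul' c F := by
    funext S
    by_cases h : g ∈ S <;> simp [h, smul_smul, mul_comm]

/-- A linear operation on coefficients, applied componentwise. -/
def cMap (f : Pu →ₗ[ℂ] Pu) : Module.End ℂ WSp where
  toFun F := fun S => f (F S)
  map_add' F G := by funext S; simp
  map_smul' c F := by funext S; simp

/-- `∂/∂u^α` on coefficients. -/
def dU (a : Fin 2) : Module.End ℂ WSp := cMap (pderiv (Sum.inl a)).toLinearMap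

/-- `∂/∂ū^{α̇}` on coefficients. -/
def dUb (a : Fin 2) : Module.End ℂ WSp := cMap (pderiv (Sum.inr a)).toLinearMap

/-- Multiplication of the coefficients by a polynomial. -/
def mU (p : Pu) : Module.End ℂ WSp := cMap (LinearMap.mulLeft ℂ p)

/-- `e(u,ū) = Σ e^{αα̇} u_α ū_{α̇}`. -/
def eUU : Module.End ℂ WSp := ∑ a, ∑ b, eOp (a, b) * mU (ulow a * ublow b)

/-- `e(∂,ū) = Σ e^{αα̇} ū_{α̇} ∂/∂u^α`. -/
def eDU : Module.End ℂ WSp := ∑ a, ∑ b, eOp (a, b) * mU (ublow b) * dU a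

/-- `e(u,∂̄) = Σ e^{αα̇} u_α ∂/∂ū^{α̇}`. -/
def eUD : Module.End ℂ WSp := ∑ a, ∑ b, eOp (a, b) * mU (ulow a) * dUb b

/-- `e(∂,∂̄) = Σ e^{αα̇} ∂²/∂u^α∂ū^{α̇}`. -/
def eDD : Module.End ℂ WSp := ∑ a, ∑ b, eOp (a, b) * dU a * dUb b

/-- The basis two-form `H^{αβ} = e^{α1}∧e^{β2} − e^{α2}∧e^{β1}` (as left multiplication). -/
def Hw (a b : Fin 2) : Module.End ℂ WSp := eOp (a, 0) * eOp (b, 1) - eOp (a, 1) * eOp (b, 0)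

/-- The basis two-form `H̄^{α̇β̇} = e^{1α̇}∧e^{2β̇} − e^{2α̇}∧e^{1β̇}`. -/
def Hbw (a b : Fin 2) : Module.End ℂ WSp := eOp (0, a) * eOp (1, b) - eOp (1, a) * eOp (0, b)

/-- `H(∂,∂) = Σ H^{αβ} ∂²/∂u^α∂u^β`. -/
def HDD : Module.End ℂ WSp := ∑ a, ∑ b, Hw a b * (dU a * dU b)

/-- `H(u,u) = Σ H^{αβ} u_α u_β`. -/
def HUU : Module.End ℂ WSp := ∑ a, ∑ b, Hw a b * mU (ulow a * ulow b)

/-- `H(u,∂) = Σ H^{αβ} u_α ∂/∂u^β`. -/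
def HUD : Module.End ℂ WSp := ∑ a, ∑ b, Hw a b * (mU (ulow a) * dU b)

/-- `H̄(∂̄,∂̄) = Σ H̄^{α̇β̇} ∂²/∂ū^{α̇}∂ū^{β̇}`. -/
def HbDD : Module.End ℂ WSp := ∑ a, ∑ b, Hbw a b * (dUb a * dUb b)

/-- `H̄(ū,ū) = Σ H̄^{α̇β̇} ū_{α̇} ū_{β̇}`. -/
def HbUU : Module.End ℂ WSp := ∑ a, ∑ b, Hbw a b * mU (ublow a * ublow b)

/-- `H̄(ū,∂̄) = Σ H̄^{α̇β̇} ū_{α̇} ∂/∂ū^{β̇}`. -/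
def HbUD : Module.End ℂ WSp := ∑ a, ∑ b, Hbw a b * (mU (ublow a) * dUb b)

/-- Weight function: degree in `(u¹,u²)`. -/
def wtU : UVar → ℕ := Sum.elim (fun _ => 1) (fun _ => 0)

/-- Weight function: degree in `(ū¹,ū²)`. -/
def wtUb : UVar → ℕ := Sum.elim (fun _ => 0) (fun _ => 1)

/-- `F` is bihomogeneous of bidegree `(A,B)` (in each exterior component). -/
def Bihom (A B : ℕ) (F : WSp) : Prop :=
  ∀ S, (F S).IsWeightedHomogeneous wtU A ∧ (F S).IsWeightedHomogeneous wtUb B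

/-- `F` lies in `Λ^k ⊗ Pu`. -/
def FormDeg (k : ℕ) (F : WSp) : Prop := ∀ S, S.card ≠ k → F S = 0

/-- A family `(n,m,r,l) ↦ ω_{n,m,r,l}` of components. -/
abbrev Fam : Type := ℕ → ℕ → ℕ → ℕ → WSp

/-- `ω` is a `(λ_h,λ_v)`-family of k-forms: every component is a k-form, bihomogeneous
of bidegree `(n+r, m+r)`, and supported on slots with `n+m = λ_h`, `2(r+l) = λ_v`. -/
def IsFam (k lh lv : ℕ) (ω : Fam) : Prop :=
  ∀ n m r l : ℕ,
    FormDeg k (ω n m r l) ∧ Bihom (n + r) (m + r) (ω n m r l) ∧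
      (¬(n + m = lh ∧ 2 * (r + l) = lv) → ω n m r l = 0)

/-- The operator σ₋, written slot-wise: the slot `(n,m,r,l)` of `σ₋ω` receives
* `[n' > m']·(n'(m'+r+l+2)/((n'+r+1)(m'+r+1))) e(∂,ū) ω_{n',m',r,l}` from `(n',m') = (n+1,m−1)`,
* `[m' > n']·(m'(n'+r+l+2)/((n'+r+1)(m'+r+1))) e(u,∂̄) ω_{n',m',r,l}` from `(n',m') = (n−1,m+1)`,
* `−((r+1)(n+m+r+2)/((n+r+2)(m+r+2))) e(∂,∂̄) ω_{n,m,r+1,l−1}` (for `l ≥ 1`). -/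
def sigmaM (ω : Fam) : Fam := fun n m r l =>
  (if 1 ≤ m ∧ m - 1 < n + 1 then
      ((((n + 1) * ((m - 1) + r + l + 2) : ℕ) : ℂ) /
          ((((n + 1) + r + 1) * ((m - 1) + r + 1) : ℕ) : ℂ)) •
        eDU (ω (n + 1) (m - 1) r l)
    else 0) +
  (if 1 ≤ n ∧ n - 1 < m + 1 then
      ((((m + 1) * ((n - 1) + r + l + 2) : ℕ) : ℂ) /
          ((((n - 1) + r + 1) * ((m + 1) + r + 1) : ℕ) : ℂ)) •
        eUD (ω (n - 1) (m + 1) r l)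
    else 0) +
  (if 1 ≤ l then
      (-((((r + 1) * (n + m + (r + 1) + 1) : ℕ) : ℂ)) /
          (((n + (r + 1) + 1) * (m + (r + 1) + 1) : ℕ) : ℂ)) •
        eDD (ω n m (r + 1) (l - 1))
    else 0)

/-- The family `F χ^r t^l` concentrated in the single slot `(n,m,r,l)`. -/
def singleSlot (n m r l : ℕ) (F : WSp) : Fam := fun n' m' r' l' =>
  if n' = n ∧ m' = m ∧ r' = r ∧ l' = l then F else 0

/-! ### Auxiliary lemmas -/

lemma euler_aux (w : UVar → ℕ) (d : UVar →₀ ℕ) (c : ℂ) :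
    ∑ i : UVar, (C (w i : ℂ)) * (X i * pderiv i (monomial d c)) =
      C ((Finsupp.weight w d : ℕ) : ℂ) * monomial d c := by
  have key : ∀ i : UVar, (C (w i : ℂ)) * (X i * pderiv i (monomial d c)) =
      C ((w i * d i : ℕ) : ℂ) * monomial d c := by
    intro i
    rw [pderiv_monomial]
    rcases Nat.eq_zero_or_pos (d i) with h | h
    · simp [h]
    · have hle : Finsupp.single i 1 ≤ d := by
        rw [Finsupp.single_le_iff]; exact h
      rw [X, monomial_mul, one_mul, add_tsub_cancel_of_le hle, C_mul_monomial, C_mul_monomial]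
      push_cast
      ring_nf
  rw [Finset.sum_congr rfl (fun i _ => key i), ← Finset.sum_mul]
  congr 1
  rw [← map_sum]
  congr 1
  rw [← Nat.cast_sum]
  congr 1
  rw [Finsupp.weight_apply, Finsupp.sum_fintype]
  · exact Finset.sum_congr rfl (fun i _ => by simp [mul_comm])
  · intro i; simp

lemma euler (w : UVar → ℕ) (N : ℕ) (p : Pu) (hp : p.IsWeightedHomogeneous w N) :
    ∑ i : UVar, (C (w i : ℂ)) * (X i * pderiv i p) = C (N : ℂ) * p := by
  conv_lhs => rw [← support_sum_monomial_coeff p]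
  conv_rhs => rw [← support_sum_monomial_coeff p]
  rw [Finset.mul_sum]
  have expand : ∀ i : UVar,
      (C (w i : ℂ)) * (X i * pderiv i (∑ d ∈ p.support, monomial d (coeff d p)))
        = ∑ d ∈ p.support, (C (w i : ℂ)) * (X i * pderiv i (monomial d (coeff d p))) := by
    intro i
    rw [map_sum, Finset.mul_sum, Finset.mul_sum]
  rw [Finset.sum_congr rfl fun i _ => expand i, Finset.sum_comm]
  refine Finset.sum_congr rfl fun d hd => ?_
  rw [euler_aux]
  congr 2
  exact congrArg _ (hp (mem_support_iff.mp hd))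

lemma euler_u (A : ℕ) (p : Pu) (hp : p.IsWeightedHomogeneous wtU A) :
    uvv 0 * pderiv (Sum.inl 0) p + uvv 1 * pderiv (Sum.inl 1) p = C (A : ℂ) * p := by
  have h := euler wtU A p hp
  rw [Fintype.sum_sum_type, Fin.sum_univ_two, Fin.sum_univ_two] at h
  simpa [wtU, uvv] using h

lemma euler_ub (B : ℕ) (p : Pu) (hp : p.IsWeightedHomogeneous wtUb B) :
    ubvv 0 * pderiv (Sum.inr 0) p + ubvv 1 * pderiv (Sum.inr 1) p = C (B : ℂ) * p := by
  have h := euler wtUb B p hp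
  rw [Fintype.sum_sum_type, Fin.sum_univ_two, Fin.sum_univ_two] at h
  simpa [wtUb, ubvv] using h
lemma master (A B : ℕ) (hA : A ≠ 0) (hB : B ≠ 0) (c1 c2 c3 : ℂ) (P Q R : Pu)
    (hP : P.IsWeightedHomogeneous wtU A)
    (hQ : Q.IsWeightedHomogeneous wtUb B)
    (hRu : R.IsWeightedHomogeneous wtU A) (hRb : R.IsWeightedHomogeneous wtUb B)
    (heq : ∀ a b : Fin 2,
      C c1 * (ublow b * pderiv (Sum.inl a) P) + C c2 * (ulow a * pderiv (Sum.inr b) Q) +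
        C c3 * (pderiv (Sum.inl a) (pderiv (Sum.inr b) R)) = 0) :
    C c1 * P = 0 ∧ C c2 * Q = 0 ∧ C c3 * R = 0 := by
  have hub0 : ublow 0 = -(ubvv 1) := rfl
  have hub1 : ublow 1 = ubvv 0 := rfl
  have hul0 : ulow 0 = -(uvv 1) := rfl
  have hul1 : ulow 1 = uvv 0 := rfl
  have hCA : (C (A:ℂ) : Pu) ≠ 0 := by simp [C_eq_zero, Nat.cast_ne_zero, hA]
  have hCB : (C (B:ℂ) : Pu) ≠ 0 := by simp [C_eq_zero, Nat.cast_ne_zero, hB]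
  have hX1 : (uvv 0 : Pu) ≠ 0 := X_ne_zero _
  have hXb1 : (ubvv 0 : Pu) ≠ 0 := X_ne_zero _
  have eQ := euler_ub B Q hQ
  have eRu := euler_u A R hRu
  have eRb := euler_ub B R hRb
  have eP := euler_u A P hP
  have hE : ∀ a : Fin 2,
      ubvv 0 * pderiv (Sum.inl a) (pderiv (Sum.inr 0) R) +
        ubvv 1 * pderiv (Sum.inl a) (pderiv (Sum.inr 1) R)
        = C (B:ℂ) * pderiv (Sum.inl a) R := by
    intro a
    have h := congrArg (pderiv (Sum.inl a)) eRb
    simpa [pderiv_mul, ubvv, pderiv_X_of_ne (by simp : (Sum.inr 0 : UVar) ≠ Sum.inl a),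
      pderiv_X_of_ne (by simp : (Sum.inr 1 : UVar) ≠ Sum.inl a), pderiv_C_mul] using h
  -- contraction over b
  have hQ3 : ∀ a : Fin 2,
      C (B:ℂ) * (C c2 * (ulow a * Q)) + C (B:ℂ) * (C c3 * pderiv (Sum.inl a) R) = 0 := by
    intro a
    have h0 := heq a 0
    have h1 := heq a 1
    rw [hub0] at h0
    rw [hub1] at h1
    linear_combination ubvv 0 * h0 + ubvv 1 * h1 - C c2 * ulow a * eQ - C c3 * hE a
  -- contraction over a
  have hR0 : C c3 * R = 0 := by
    have h0 := hQ3 0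
    have h1 := hQ3 1
    rw [hul0] at h0
    rw [hul1] at h1
    have key : C (A:ℂ) * (C (B:ℂ) * (C c3 * R)) = 0 := by
      linear_combination uvv 0 * h0 + uvv 1 * h1 - C (B:ℂ) * C c3 * eRu
    rcases mul_eq_zero.mp key with h | h
    · exact absurd h hCA
    rcases mul_eq_zero.mp h with h | h
    · exact absurd h hCB
    · exact h
  have hQ0 : C c2 * Q = 0 := by
    have h1 := hQ3 1
    rw [hul1] at h1
    have hdR : C c3 * pderiv (Sum.inl 1) R = 0 := by
      rw [← pderiv_C_mul, hR0, map_zero]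
    have key : C (B:ℂ) * (uvv 0 * (C c2 * Q)) = 0 := by
      linear_combination h1 - C (B:ℂ) * hdR
    rcases mul_eq_zero.mp key with h | h
    · exact absurd h hCB
    rcases mul_eq_zero.mp h with h | h
    · exact absurd h hX1
    · exact h
  have hP0 : C c1 * P = 0 := by
    have hdP : ∀ a : Fin 2, C c1 * pderiv (Sum.inl a) P = 0 := by
      intro a
      have h1 := heq a 1
      rw [hub1] at h1
      have hdQ : C c2 * pderiv (Sum.inr 1) Q = 0 := by
        rw [← pderiv_C_mul, hQ0, map_zero]
      have hddR : C c3 * pderiv (Sum.inl a) (pderiv (Sum.inr 1) R) = 0 := by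
        rw [← pderiv_C_mul, ← pderiv_C_mul, hR0, map_zero, map_zero]
      have key : ubvv 0 * (C c1 * pderiv (Sum.inl a) P) = 0 := by
        linear_combination h1 - ulow a * hdQ - hddR
      rcases mul_eq_zero.mp key with h | h
      · exact absurd h hXb1
      · exact h
    have key : C (A:ℂ) * (C c1 * P) = 0 := by
      linear_combination uvv 0 * hdP 0 + uvv 1 * hdP 1 - C c1 * eP
    rcases mul_eq_zero.mp key with h | h
    · exact absurd h hCA
    · exact h
  exact ⟨hP0, hQ0, hR0⟩
lemma sgn_self (g : GIdx) : sgn g {g} = 1 := by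
  simp [sgn, Finset.filter_singleton]

lemma eval_eDU (F : WSp) (a b : Fin 2) :
    eDU F {(a, b)} = ublow b * pderiv (Sum.inl a) (F ∅) := by
  simp only [eDU, LinearMap.sum_apply, Module.End.mul_apply, Finset.sum_apply]
  simp only [eOp, mU, dU, cMap, LinearMap.coe_mk, AddHom.coe_mk, Finset.mem_singleton,
    Prod.mk.injEq, LinearMap.mulLeft_apply]
  rw [Finset.sum_comm]
  rw [Fin.sum_univ_two, Fin.sum_univ_two]
  fin_cases a <;> fin_cases b <;>
    simp [sgn_self, Finset.erase_singleton, AlgHom.toLinearMap_apply]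

lemma eval_eUD (F : WSp) (a b : Fin 2) :
    eUD F {(a, b)} = ulow a * pderiv (Sum.inr b) (F ∅) := by
  simp only [eUD, LinearMap.sum_apply, Module.End.mul_apply, Finset.sum_apply]
  simp only [eOp, mU, dUb, cMap, LinearMap.coe_mk, AddHom.coe_mk, Finset.mem_singleton,
    Prod.mk.injEq, LinearMap.mulLeft_apply]
  rw [Finset.sum_comm]
  rw [Fin.sum_univ_two, Fin.sum_univ_two]
  fin_cases a <;> fin_cases b <;>
    simp [sgn_self, Finset.erase_singleton, AlgHom.toLinearMap_apply]

lemma eval_eDD (F : WSp) (a b : Fin 2) :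
    eDD F {(a, b)} = pderiv (Sum.inl a) (pderiv (Sum.inr b) (F ∅)) := by
  simp only [eDD, LinearMap.sum_apply, Module.End.mul_apply, Finset.sum_apply]
  simp only [eOp, dU, dUb, cMap, LinearMap.coe_mk, AddHom.coe_mk, Finset.mem_singleton,
    Prod.mk.injEq]
  rw [Finset.sum_comm]
  rw [Fin.sum_univ_two, Fin.sum_univ_two]
  fin_cases a <;> fin_cases b <;>
    simp [sgn_self, Finset.erase_singleton, AlgHom.toLinearMap_apply]

/-- Coefficient of the `eDU` term in `sigmaM`. -/
def Cc1 (n m r l : ℕ) : ℂ :=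
  if 1 ≤ m ∧ m - 1 < n + 1 then
    ((((n + 1) * ((m - 1) + r + l + 2) : ℕ) : ℂ) /
      ((((n + 1) + r + 1) * ((m - 1) + r + 1) : ℕ) : ℂ))
  else 0

/-- Coefficient of the `eUD` term in `sigmaM`. -/
def Cc2 (n m r l : ℕ) : ℂ :=
  if 1 ≤ n ∧ n - 1 < m + 1 then
    ((((m + 1) * ((n - 1) + r + l + 2) : ℕ) : ℂ) /
      ((((n - 1) + r + 1) * ((m + 1) + r + 1) : ℕ) : ℂ))
  else 0

/-- Coefficient of the `eDD` term in `sigmaM`. -/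
def Cc3 (n m r l : ℕ) : ℂ :=
  if 1 ≤ l then
    (-((((r + 1) * (n + m + (r + 1) + 1) : ℕ) : ℂ)) /
      (((n + (r + 1) + 1) * (m + (r + 1) + 1) : ℕ) : ℂ))
  else 0

lemma slot_eq (ℰ : Fam) (hσ : sigmaM ℰ = 0) (n m r l : ℕ) (a b : Fin 2) :
    C (Cc1 n m r l) * (ublow b * pderiv (Sum.inl a) (ℰ (n + 1) (m - 1) r l ∅)) +
      C (Cc2 n m r l) * (ulow a * pderiv (Sum.inr b) (ℰ (n - 1) (m + 1) r l ∅)) +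
      C (Cc3 n m r l) * (pderiv (Sum.inl a) (pderiv (Sum.inr b) (ℰ n m (r + 1) (l - 1) ∅))) =
      0 := by
  have h : sigmaM ℰ n m r l {(a, b)} = 0 := by rw [hσ]; rfl
  simp only [sigmaM, Pi.add_apply] at h
  rw [apply_ite (fun F : WSp => F {(a, b)}), apply_ite (fun F : WSp => F {(a, b)}),
    apply_ite (fun F : WSp => F {(a, b)})] at h
  simp only [Pi.smul_apply, Pi.zero_apply, eval_eDU, eval_eUD, eval_eDD,
    smul_eq_C_mul] at h
  rw [← h, Cc1, Cc2, Cc3]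
  simp only [apply_ite C, map_zero, ite_mul, zero_mul]

lemma zero_of_empty (F : WSp) (h0 : FormDeg 0 F) (he : F ∅ = 0) : F = 0 := by
  funext S
  by_cases hS : S = ∅
  · rw [hS, he]; rfl
  · exact h0 S (by simpa [Finset.card_eq_zero] using hS)

lemma slot_master (lh lv : ℕ) (ℰ : Fam) (hℰ : IsFam 0 lh lv ℰ) (hσ : sigmaM ℰ = 0)
    (n m r l : ℕ) :
    C (Cc1 n m r l) * (ℰ (n + 1) (m - 1) r l ∅) = 0 ∧
      C (Cc2 n m r l) * (ℰ (n - 1) (m + 1) r l ∅) = 0 ∧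
      C (Cc3 n m r l) * (ℰ n m (r + 1) (l - 1) ∅) = 0 := by
  have hP := ((hℰ (n + 1) (m - 1) r l).2.1 ∅).1
  have hQ := ((hℰ (n - 1) (m + 1) r l).2.1 ∅).2
  have hRu := ((hℰ n m (r + 1) (l - 1)).2.1 ∅).1
  have hRb := ((hℰ n m (r + 1) (l - 1)).2.1 ∅).2
  rw [show n + 1 + r = n + r + 1 by omega] at hP
  rw [show m + 1 + r = m + r + 1 by omega] at hQ
  rw [show n + (r + 1) = n + r + 1 by omega] at hRu
  rw [show m + (r + 1) = m + r + 1 by omega] at hRb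
  exact master (n + r + 1) (m + r + 1) (by omega) (by omega) _ _ _ _ _ _
    hP hQ hRu hRb (slot_eq ℰ hσ n m r l)

lemma bad_zero (lh lv : ℕ) (ℰ : Fam) (hℰ : IsFam 0 lh lv ℰ) (hσ : sigmaM ℰ = 0)
    (N M R L : ℕ) (hbad : N ≠ M ∨ R ≠ 0) : ℰ N M R L = 0 := by
  rcases Nat.lt_trichotomy N M with h | h | h
  · -- use the `eUD` slot of the output at (N+1, M-1, R, L)
    have hm := (slot_master lh lv ℰ hℰ hσ (N + 1) (M - 1) R L).2.1
    rw [show N + 1 - 1 = N by omega, show M - 1 + 1 = M by omega] at hm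
    have hc : Cc2 (N + 1) (M - 1) R L ≠ 0 := by
      rw [Cc2, if_pos (by omega : 1 ≤ N + 1 ∧ N + 1 - 1 < M - 1 + 1)]
      exact div_ne_zero (Nat.cast_ne_zero.mpr (Nat.mul_ne_zero (by omega) (by omega)))
        (Nat.cast_ne_zero.mpr (Nat.mul_ne_zero (by omega) (by omega)))
    rcases mul_eq_zero.mp hm with h' | h'
    · exact absurd (by simpa [C_eq_zero] using h') hc
    · exact zero_of_empty _ (hℰ N M R L).1 h'
  · -- N = M, so R ≠ 0 : use the `eDD` slot of the output at (N, M, R-1, L+1)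
    have hR : R ≠ 0 := by tauto
    have hm := (slot_master lh lv ℰ hℰ hσ N M (R - 1) (L + 1)).2.2
    rw [show R - 1 + 1 = R by omega, show L + 1 - 1 = L by omega] at hm
    have hc : Cc3 N M (R - 1) (L + 1) ≠ 0 := by
      rw [Cc3, if_pos (by omega : 1 ≤ L + 1)]
      refine div_ne_zero (neg_ne_zero.mpr (Nat.cast_ne_zero.mpr
        (Nat.mul_ne_zero (by omega) (by omega))))
        (Nat.cast_ne_zero.mpr (Nat.mul_ne_zero (by omega) (by omega)))
    rcases mul_eq_zero.mp hm with h' | h'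
    · exact absurd (by simpa [C_eq_zero] using h') hc
    · exact zero_of_empty _ (hℰ N M R L).1 h'
  · -- use the `eDU` slot of the output at (N-1, M+1, R, L)
    have hm := (slot_master lh lv ℰ hℰ hσ (N - 1) (M + 1) R L).1
    rw [show N - 1 + 1 = N by omega, show M + 1 - 1 = M by omega] at hm
    have hc : Cc1 (N - 1) (M + 1) R L ≠ 0 := by
      rw [Cc1, if_pos (by omega : 1 ≤ M + 1 ∧ M + 1 - 1 < N - 1 + 1)]
      exact div_ne_zero (Nat.cast_ne_zero.mpr (Nat.mul_ne_zero (by omega) (by omega)))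
        (Nat.cast_ne_zero.mpr (Nat.mul_ne_zero (by omega) (by omega)))
    rcases mul_eq_zero.mp hm with h' | h'
    · exact absurd (by simpa [C_eq_zero] using h') hc
    · exact zero_of_empty _ (hℰ N M R L).1 h'

lemma ite_term_zero (P : Prop) [Decidable P] (c : ℂ) (op : Module.End ℂ WSp) (F : WSp)
    (h : P → F = 0) : (if P then c • op F else 0) = 0 := by
  split_ifs with hp
  · rw [h hp, map_zero, smul_zero]
  · rfl
/-- on `(λ_h,λ_v)`-families of 0-forms, `σ₋ℰ = 0` iff all components away
from the slot `(n,m,r) = (λ_h/2, λ_h/2, 0)` vanish; consequently (since no form degree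
lies below 0) `H⁰(σ₋)` consists exactly of the families
`ℰ_{λ_h/2, λ_h/2, 0, λ_v/2} t^{λ_v/2}` with an arbitrary bihomogeneous coefficient of
bidegree `(λ_h/2, λ_h/2)`. -/
theorem stmt16 (lh lv : ℕ) (hlh : Even lh) (hlv : Even lv)
    (ℰ : Fam) (hℰ : IsFam 0 lh lv ℰ) :
    (sigmaM ℰ = 0 ↔
      ∀ n m r l : ℕ, ¬(n = lh / 2 ∧ m = lh / 2 ∧ r = 0) → ℰ n m r l = 0) ∧
    (sigmaM ℰ = 0 ↔
      ∃ G : WSp, FormDeg 0 G ∧ Bihom (lh / 2) (lh / 2) G ∧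
        ℰ = singleSlot (lh / 2) (lh / 2) 0 (lv / 2) G) := by
  obtain ⟨kh, hkh⟩ := hlh
  obtain ⟨kv, hkv⟩ := hlv
  have iff1 : sigmaM ℰ = 0 ↔
      ∀ n m r l : ℕ, ¬(n = lh / 2 ∧ m = lh / 2 ∧ r = 0) → ℰ n m r l = 0 := by
    constructor
    · intro hσ n m r l hbad
      by_cases hsupp : n + m = lh ∧ 2 * (r + l) = lv
      · refine bad_zero lh lv ℰ hℰ hσ n m r l ?_
        by_cases hr : r = 0
        · left
          intro hnm
          exact hbad ⟨by omega, by omega, hr⟩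
        · right; exact hr
      · exact (hℰ n m r l).2.2 hsupp
    · intro hz
      funext n m r l
      show _ = (0 : WSp)
      simp only [sigmaM]
      rw [ite_term_zero _ _ _ _ (fun h => hz (n + 1) (m - 1) r l (by rintro ⟨e1, e2, e3⟩; omega)),
        ite_term_zero _ _ _ _ (fun h => hz (n - 1) (m + 1) r l (by rintro ⟨e1, e2, e3⟩; omega)),
        ite_term_zero _ _ _ _ (fun h => hz n m (r + 1) (l - 1) (by rintro ⟨e1, e2, e3⟩; omega))]
      simp
  refine ⟨iff1, ?_⟩
  rw [iff1]
  constructor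
  · intro hz
    refine ⟨ℰ (lh / 2) (lh / 2) 0 (lv / 2), (hℰ _ _ _ _).1, ?_, ?_⟩
    · have hb := (hℰ (lh / 2) (lh / 2) 0 (lv / 2)).2.1
      simpa using hb
    · funext n m r l
      rw [singleSlot]
      split_ifs with hcase
      · obtain ⟨h1, h2, h3, h4⟩ := hcase
        rw [h1, h2, h3, h4]
      · by_cases hnmr : n = lh / 2 ∧ m = lh / 2 ∧ r = 0
        · obtain ⟨h1, h2, h3⟩ := hnmr
          refine (hℰ n m r l).2.2 ?_
          rintro ⟨hs1, hs2⟩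
          exact hcase ⟨h1, h2, h3, by omega⟩
        · exact hz n m r l hnmr
  · rintro ⟨G, hG0, hGb, rfl⟩ n m r l hbad
    rw [singleSlot]
    split_ifs with h
    · exact absurd ⟨h.1, h.2.1, h.2.2.1⟩ hbad
    · rfl

end
end
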